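/- arXiv:2101.02137 — 3 statements merged into one kernel-verified Lean document; each statement's English description precedes it below -/
import Mathlib

section
/- Let \(J : \mathbb{R}^d \to \mathbb{R}\) be differentiable with L-Lipschitz gradient, and let \(J_\mu(\theta) = \mathbb{E}_{u \sim \mathrm{Unif}(\mathbb{B}^d)}[J(\theta + \mu u)]\). Then for all \(\theta\), \(\|\nabla J_\mu(\theta) - \nabla J(\theta)\| \le \frac{\mu d L}{2}\). -/
/-!
Differentiating under the integral sign gives `∇J_μ(θ) = 𝔼[∇J(θ + μu)]`, so the Lipschitz bound
on `∇J` makes the bias at most `L μ 𝔼‖u‖`. In polar coordinates, `𝔼‖u‖ = d / (d + 1) ≤ d / 2`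
for `u` uniform on the unit ball of `ℝ^d`.
-/

open MeasureTheory Metric

/-- Uniform probability measure on the closed unit ball of `ℝ^d`. -/
noncomputable def unifBall (d : ℕ) : Measure (EuclideanSpace ℝ (Fin d)) :=
  (volume (closedBall (0 : EuclideanSpace ℝ (Fin d)) 1))⁻¹ •
    volume.restrict (closedBall (0 : EuclideanSpace ℝ (Fin d)) 1)

section Smoothing

variable {E F : Type*} [NormedAddCommGroup E] [ProperSpace E] [MeasurableSpace E] [BorelSpace E]
  [NormedAddCommGroup F] {ν : Measure E}

theorem integrable_of_ae_mem_closedBall [IsFiniteMeasure ν] {g : E → F}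
    (hν : ∀ᵐ u ∂ν, u ∈ closedBall (0 : E) 1) (hg : Continuous g) : Integrable g ν := by
  rw [← Measure.restrict_eq_self_of_ae_mem hν]
  exact hg.continuousOn.integrableOn_compact (isCompact_closedBall _ _)

variable [NormedSpace ℝ E] [NormedSpace ℝ F]

theorem hasFDerivAt_integral_comp_add_smul [IsFiniteMeasure ν]
    (hν : ∀ᵐ u ∂ν, u ∈ closedBall (0 : E) 1) {J : E → F} (hJ : Differentiable ℝ J)
    (hJ' : Continuous (fderiv ℝ J)) (μ : ℝ) (θ : E) :
    HasFDerivAt (fun x => ∫ u, J (x + μ • u) ∂ν) (∫ u, fderiv ℝ J (θ + μ • u) ∂ν) θ := by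
  have h_shift : ∀ x : E, Continuous fun u : E => x + μ • u := by fun_prop
  obtain ⟨C, hC⟩ := (isCompact_closedBall θ (1 + |μ|)).exists_bound_of_continuousOn
    hJ'.continuousOn
  refine hasFDerivAt_integral_of_dominated_of_fderiv_le
    (F' := fun x u => fderiv ℝ J (x + μ • u)) (bound := fun _ => C) (ball_mem_nhds θ one_pos)
    (.of_forall fun x => (hJ.continuous.comp (h_shift x)).aestronglyMeasurable)
    (integrable_of_ae_mem_closedBall hν (hJ.continuous.comp (h_shift θ)))
    (hJ'.comp (h_shift θ)).aestronglyMeasurable ?_ (integrable_const C)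
    (.of_forall fun u x _ => (hJ _).hasFDerivAt.comp x ((hasFDerivAt_id x).add_const _))
  filter_upwards [hν] with u hu x hx
  refine hC _ (mem_closedBall_iff_norm.2 ?_)
  calc ‖x + μ • u - θ‖ = ‖(x - θ) + μ • u‖ := by rw [add_sub_right_comm]
    _ ≤ ‖x - θ‖ + |μ| * ‖u‖ := by rw [← Real.norm_eq_abs, ← norm_smul]; exact norm_add_le _ _
    _ ≤ 1 + |μ| * 1 := by
      gcongr
      · exact (mem_ball_iff_norm.1 hx).le
      · exact mem_closedBall_zero_iff.1 hu
    _ = 1 + |μ| := by rw [mul_one]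

theorem LipschitzWith.norm_integral_comp_add_smul_sub_le [CompleteSpace F]
    [IsProbabilityMeasure ν] (hν : ∀ᵐ u ∂ν, u ∈ closedBall (0 : E) 1) {f : E → F} {K : NNReal}
    (hf : LipschitzWith K f) (μ : ℝ) (θ : E) :
    ‖∫ u, f (θ + μ • u) ∂ν - f θ‖ ≤ K * |μ| * ∫ u, ‖u‖ ∂ν := by
  have h_int : Integrable (fun u => f (θ + μ • u)) ν :=
    integrable_of_ae_mem_closedBall hν (hf.continuous.comp (by fun_prop))
  have h_mean : ∫ u, f (θ + μ • u) ∂ν - f θ = ∫ u, (f (θ + μ • u) - f θ) ∂ν := by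
    rw [integral_sub h_int (integrable_const _), integral_const, probReal_univ, one_smul]
  rw [h_mean, ← integral_const_mul]
  refine norm_integral_le_of_norm_le
    (integrable_of_ae_mem_closedBall hν (by fun_prop)) (.of_forall fun u => ?_)
  calc ‖f (θ + μ • u) - f θ‖ ≤ K * ‖θ + μ • u - θ‖ := hf.norm_sub_le _ _
    _ = K * |μ| * ‖u‖ := by rw [add_sub_cancel_left, norm_smul, Real.norm_eq_abs, mul_assoc]

end Smoothing

section NormOnBall

variable {E : Type*} [NormedAddCommGroup E] [NormedSpace ℝ E] [Nontrivial E]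
  [FiniteDimensional ℝ E] [MeasurableSpace E] [BorelSpace E] (ν : Measure E) [ν.IsAddHaarMeasure]

theorem setIntegral_norm_closedBall_zero_one :
    ∫ x in closedBall (0 : E) 1, ‖x‖ ∂ν =
      Module.finrank ℝ E / (Module.finrank ℝ E + 1) * ν.real (ball 0 1) := by
  set n := Module.finrank ℝ E
  have hn : 0 < n := Module.finrank_pos
  have h_radial : ∀ x : E,
      (closedBall (0 : E) 1).indicator norm x = (Set.Iic 1).indicator id ‖x‖ := fun x => by
    simp [Set.indicator]
  have h_radial_integral : ∫ y in Set.Ioi (0 : ℝ), y ^ (n - 1) • (Set.Iic 1).indicator id y =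
      1 / (n + 1) := by
    have h_eq : Set.EqOn (fun y : ℝ => y ^ (n - 1) • (Set.Iic 1).indicator id y)
        ((Set.Iic 1).indicator (· ^ n)) (Set.Ioi 0) := by
      intro y _
      by_cases hy : y ≤ 1
      · simp [hy, ← pow_succ, Nat.sub_add_cancel hn]
      · simp [hy]
    rw [setIntegral_congr_fun measurableSet_Ioi h_eq, integral_indicator measurableSet_Iic,
      Measure.restrict_restrict measurableSet_Iic, Set.Iic_inter_Ioi,
      ← intervalIntegral.integral_of_le zero_le_one, integral_pow]
    simp
  rw [← integral_indicator measurableSet_closedBall, funext h_radial,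
    integral_fun_norm_addHaar ν, h_radial_integral]
  simp only [nsmul_eq_mul, smul_eq_mul]
  ring

end NormOnBall

theorem lipschitzWith_fderiv_iff_gradient {E : Type*} [NormedAddCommGroup E]
    [InnerProductSpace ℝ E] [CompleteSpace E] {f : E → ℝ} (K : NNReal) :
    LipschitzWith K (fderiv ℝ f) ↔ LipschitzWith K (gradient f) := by
  rw [← toDual_comp_gradient]
  exact (InnerProductSpace.toDual ℝ E).isometry.lipschitzWith_iff K

instance (d : ℕ) : IsProbabilityMeasure (unifBall d) := by
  constructor
  rw [unifBall, Measure.smul_apply, Measure.restrict_apply_univ, smul_eq_mul]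
  exact ENNReal.inv_mul_cancel (measure_closedBall_pos _ _ one_pos).ne'
    measure_closedBall_lt_top.ne

theorem ae_mem_closedBall_unifBall (d : ℕ) :
    ∀ᵐ u ∂(unifBall d), u ∈ closedBall (0 : EuclideanSpace ℝ (Fin d)) 1 :=
  Measure.ae_smul_measure (ae_restrict_mem measurableSet_closedBall) _

theorem integral_norm_unifBall {d : ℕ} (hd : 0 < d) :
    ∫ u, ‖u‖ ∂(unifBall d) = d / (d + 1) := by
  have : Nontrivial (EuclideanSpace ℝ (Fin d)) :=
    Module.nontrivial_of_finrank_pos (R := ℝ) (by rwa [finrank_euclideanSpace_fin])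
  have h_vol : volume.real (ball (0 : EuclideanSpace ℝ (Fin d)) 1) ≠ 0 :=
    ENNReal.toReal_ne_zero.2 ⟨(measure_ball_pos _ _ one_pos).ne', measure_ball_lt_top.ne⟩
  rw [unifBall, integral_smul_measure, setIntegral_norm_closedBall_zero_one,
    Measure.addHaar_closedBall_eq_addHaar_ball, finrank_euclideanSpace_fin, ENNReal.toReal_inv,
    ← measureReal_def, smul_eq_mul]
  field_simp

/-- Bias of the ball-smoothed functional: if `∇J` is `L`-Lipschitz, then
`‖∇J_μ(θ) - ∇J(θ)‖ ≤ μ d L / 2`. -/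
theorem smoothed_gradient_bias {d : ℕ} (hd : 0 < d)
    (J : EuclideanSpace ℝ (Fin d) → ℝ) (hJ : Differentiable ℝ J)
    (L : ℝ) (hL : 0 < L)
    (hlip : ∀ x y, ‖gradient J x - gradient J y‖ ≤ L * ‖x - y‖)
    (μ : ℝ) (hμ : 0 < μ) (θ : EuclideanSpace ℝ (Fin d)) :
    ‖gradient (fun x => ∫ u, J (x + μ • u) ∂(unifBall d)) θ - gradient J θ‖ ≤
      μ * d * L / 2 := by
  have h_fderiv : LipschitzWith L.toNNReal (fderiv ℝ J) :=
    (lipschitzWith_fderiv_iff_gradient _).2 <| .of_dist_le' fun x y => by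
      simpa only [dist_eq_norm] using hlip x y
  have h_smooth := hasFDerivAt_integral_comp_add_smul (ae_mem_closedBall_unifBall d) hJ
    h_fderiv.continuous μ θ
  have h_bias := h_fderiv.norm_integral_comp_add_smul_sub_le (ae_mem_closedBall_unifBall d) μ θ
  rw [Real.coe_toNNReal L hL.le, abs_of_pos hμ, integral_norm_unifBall hd] at h_bias
  have h_ratio : (d : ℝ) / (d + 1) ≤ d / 2 := by
    have : (1 : ℝ) ≤ d := Nat.one_le_cast.2 hd
    gcongr
    linarith
  rw [gradient, gradient, h_smooth.fderiv, ← map_sub, LinearIsometryEquiv.norm_map]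
  calc _ ≤ L * μ * (d / (d + 1)) := h_bias
    _ ≤ L * μ * (d / 2) := by gcongr
    _ = μ * d * L / 2 := by ring
end

section
/- Let \(f : \mathbb{R}^d \to \mathbb{R}\) be L-Lipschitz, v uniform on \(\mathbb{S}^{d-1}\), and suppose the Lévy concentration inequality \(\mathbb{P}(|f(\theta + \mu v) - \mathbb{E}_v[f(\theta + \mu v)]| > \epsilon) \le 4 e^{-c_0 \epsilon^2 d / (\mu^2 L^2)}\) holds. Then the single-sample symmetric-difference gradient estimator \(G = \frac{d}{2\mu}(f(\theta + \mu v) - f(\theta - \mu v)) v\) satisfies \(\mathbb{E}[\|G\|^2] \le \frac{4 d L^2}{c_0}\). -/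
open MeasureTheory

/-- Second-moment bound for the single-sample symmetric-difference gradient estimator
`G = (d/2μ)(f(θ+μv) - f(θ-μv)) v` under Lévy concentration on the sphere:
`E‖G‖² ≤ 4 d L² / c₀`. -/
theorem sf_estimator_second_moment {d : ℕ} (hd : 0 < d)
    (σ : Measure (EuclideanSpace ℝ (Fin d))) [IsProbabilityMeasure σ]
    (hsupp : ∀ᵐ v ∂σ, ‖v‖ = 1)
    (hsym : σ.map (fun v => -v) = σ)
    (f : EuclideanSpace ℝ (Fin d) → ℝ) (L : ℝ) (hL : 0 < L)
    (hlip : ∀ x y, |f x - f y| ≤ L * ‖x - y‖) (hcont : Continuous f)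
    (μ : ℝ) (hμ : 0 < μ) (θ : EuclideanSpace ℝ (Fin d)) (c₀ : ℝ) (hc₀ : 0 < c₀)
    (hconc : ∀ ε : ℝ, 0 < ε →
      (σ {v | |f (θ + μ • v) - ∫ w, f (θ + μ • w) ∂σ| > ε}).toReal ≤
        4 * Real.exp (-c₀ * ε ^ 2 * d / (μ ^ 2 * L ^ 2))) :
    (∫ v, ‖((d : ℝ) / (2 * μ)) • ((f (θ + μ • v) - f (θ - μ • v)) • v)‖ ^ 2 ∂σ) ≤
      4 * d * L ^ 2 / c₀ := by
  have hdR : (0:ℝ) < d := Nat.cast_pos.mpr hd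
  set m : ℝ := ∫ w, f (θ + μ • w) ∂σ with hm
  set F : EuclideanSpace ℝ (Fin d) → ℝ := fun v => f (θ + μ • v) with hF
  set G : EuclideanSpace ℝ (Fin d) → ℝ := fun v => f (θ - μ • v) with hG
  have hFc : Continuous F := hcont.comp (continuous_const.add (continuous_id.const_smul μ))
  have hGc : Continuous G := hcont.comp (continuous_const.sub (continuous_id.const_smul μ))
  set B : ℝ := L * μ + |f θ - m| with hB
  have hB0 : 0 ≤ B := by positivity
  -- a.e. bounds
  have hFb : ∀ᵐ v ∂σ, |F v - m| ≤ B := by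
    filter_upwards [hsupp] with v hv
    have h1 : |F v - f θ| ≤ L * μ := by
      have := hlip (θ + μ • v) θ
      simpa [norm_smul, hv, abs_of_pos hμ, add_sub_cancel_left] using this
    calc |F v - m| = |(F v - f θ) + (f θ - m)| := by ring_nf
      _ ≤ |F v - f θ| + |f θ - m| := abs_add_le _ _
      _ ≤ B := by rw [hB]; linarith
  have hGb : ∀ᵐ v ∂σ, |G v - m| ≤ B := by
    filter_upwards [hsupp] with v hv
    have h1 : |G v - f θ| ≤ L * μ := by
      have := hlip (θ - μ • v) θ
      simpa [norm_smul, hv, abs_of_pos hμ, sub_sub_cancel_left, norm_neg] using this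
    calc |G v - m| = |(G v - f θ) + (f θ - m)| := by ring_nf
      _ ≤ |G v - f θ| + |f θ - m| := abs_add_le _ _
      _ ≤ B := by rw [hB]; linarith
  -- integrability
  have hintF2 : Integrable (fun v => (F v - m) ^ 2) σ := by
    refine Integrable.mono' (integrable_const (B ^ 2))
      (((hFc.sub continuous_const).pow 2).aestronglyMeasurable) ?_
    filter_upwards [hFb] with v hv
    have : (F v - m) ^ 2 ≤ B ^ 2 := by nlinarith [abs_nonneg (F v - m), sq_abs (F v - m)]
    simpa [abs_of_nonneg (sq_nonneg (F v - m)), Real.norm_eq_abs] using this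
  have hintG2 : Integrable (fun v => (G v - m) ^ 2) σ := by
    refine Integrable.mono' (integrable_const (B ^ 2))
      (((hGc.sub continuous_const).pow 2).aestronglyMeasurable) ?_
    filter_upwards [hGb] with v hv
    have : (G v - m) ^ 2 ≤ B ^ 2 := by nlinarith [abs_nonneg (G v - m), sq_abs (G v - m)]
    simpa [abs_of_nonneg (sq_nonneg (G v - m)), Real.norm_eq_abs] using this
  have hintFG2 : Integrable (fun v => (F v - G v) ^ 2) σ := by
    refine Integrable.mono' (integrable_const ((2*B) ^ 2))
      (((hFc.sub hGc).pow 2).aestronglyMeasurable) ?_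
    filter_upwards [hFb, hGb] with v h1 h2
    have : (F v - G v) ^ 2 ≤ (2*B) ^ 2 := by
      have e1 := abs_le.mp h1
      have e2 := abs_le.mp h2
      nlinarith [e1.1, e1.2, e2.1, e2.2]
    simpa [abs_of_nonneg (sq_nonneg (F v - G v)), Real.norm_eq_abs] using this
  -- layer cake: variance bound
  set a : ℝ := c₀ * d / (μ ^ 2 * L ^ 2) with ha
  have ha0 : 0 < a := by positivity
  have hvar : ∫ v, (F v - m) ^ 2 ∂σ ≤ 4 * μ ^ 2 * L ^ 2 / (c₀ * d) := by
    have key := hintF2.integral_eq_integral_meas_lt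
      (Filter.Eventually.of_forall fun v => sq_nonneg (F v - m))
    rw [key]
    have hbound : ∀ t ∈ Set.Ioi (0:ℝ),
        (σ {v | t < (F v - m) ^ 2}).toReal ≤ 4 * Real.exp (-a * t) := by
      intro t ht
      have ht0 : (0:ℝ) < t := ht
      have hset : {v | t < (F v - m) ^ 2} = {v | |F v - m| > Real.sqrt t} := by
        ext v
        simp only [Set.mem_setOf_eq, gt_iff_lt]
        constructor
        · intro h
          have := Real.sqrt_lt_sqrt ht0.le h
          rwa [Real.sqrt_sq_eq_abs] at this
        · intro h
          nlinarith [Real.sq_sqrt ht0.le, Real.sqrt_nonneg t, sq_abs (F v - m)]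
      have := hconc (Real.sqrt t) (Real.sqrt_pos.mpr ht0)
      rw [Real.sq_sqrt ht0.le] at this
      rw [hset]
      refine this.trans (le_of_eq ?_)
      congr 1
      rw [ha]
      field_simp
    calc ∫ t in Set.Ioi (0:ℝ), (σ {v | t < (F v - m) ^ 2}).toReal
        ≤ ∫ t in Set.Ioi (0:ℝ), 4 * Real.exp (-a * t) := by
          refine integral_mono_of_nonneg
            (Filter.Eventually.of_forall fun t => ENNReal.toReal_nonneg)
            ((exp_neg_integrableOn_Ioi 0 ha0).const_mul 4) ?_
          filter_upwards [ae_restrict_mem measurableSet_Ioi] with t ht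
          exact hbound t ht
      _ = 4 * a⁻¹ := by
          rw [integral_const_mul]
          congr 1
          have h1 := integral_exp_neg_mul_rpow (p := 1) one_pos ha0
          simpa [Real.rpow_one, one_add_one_eq_two, Real.Gamma_two, Real.rpow_neg_one] using h1
      _ = 4 * μ ^ 2 * L ^ 2 / (c₀ * d) := by
          rw [ha]; field_simp
  -- symmetry
  have hsymInt : ∫ v, (G v - m) ^ 2 ∂σ = ∫ v, (F v - m) ^ 2 ∂σ := by
    conv_rhs => rw [← hsym]
    rw [integral_map measurable_neg.aemeasurable]
    · refine integral_congr_ae (Filter.Eventually.of_forall fun v => ?_)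
      have h : F (-v) = G v := by
        simp [hF, hG, smul_neg, sub_eq_add_neg]
      show (G v - m) ^ 2 = (F (-v) - m) ^ 2
      rw [h]
    · rw [hsym]
      exact ((hFc.sub continuous_const).pow 2).aestronglyMeasurable
  -- pointwise a.e. identity for the integrand
  have hLHS : (∫ v, ‖((d : ℝ) / (2 * μ)) • ((f (θ + μ • v) - f (θ - μ • v)) • v)‖ ^ 2 ∂σ)
      = ((d : ℝ) / (2 * μ)) ^ 2 * ∫ v, (F v - G v) ^ 2 ∂σ := by
    rw [← integral_const_mul]
    refine integral_congr_ae ?_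
    filter_upwards [hsupp] with v hv
    rw [norm_smul, norm_smul, hv, mul_one, Real.norm_eq_abs, Real.norm_eq_abs,
      mul_pow, sq_abs, sq_abs]
  rw [hLHS]
  have hsum : ∫ v, (F v - G v) ^ 2 ∂σ ≤ 16 * μ ^ 2 * L ^ 2 / (c₀ * d) := by
    have hmono : ∫ v, (F v - G v) ^ 2 ∂σ ≤
        ∫ v, (2 * (F v - m) ^ 2 + 2 * (G v - m) ^ 2) ∂σ := by
      refine integral_mono hintFG2 ((hintF2.const_mul 2).add (hintG2.const_mul 2)) ?_
      intro v
      dsimp only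
      nlinarith [sq_nonneg (F v - m + (G v - m)), sq_nonneg (F v - m - (G v - m))]
    rw [integral_add (hintF2.const_mul 2) (hintG2.const_mul 2),
      integral_const_mul, integral_const_mul, hsymInt] at hmono
    calc ∫ v, (F v - G v) ^ 2 ∂σ ≤ 4 * ∫ v, (F v - m) ^ 2 ∂σ := by linarith
      _ ≤ 4 * (4 * μ ^ 2 * L ^ 2 / (c₀ * d)) := by linarith
      _ = 16 * μ ^ 2 * L ^ 2 / (c₀ * d) := by ring
  calc ((d : ℝ) / (2 * μ)) ^ 2 * ∫ v, (F v - G v) ^ 2 ∂σ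
      ≤ ((d : ℝ) / (2 * μ)) ^ 2 * (16 * μ ^ 2 * L ^ 2 / (c₀ * d)) :=
        mul_le_mul_of_nonneg_left hsum (sq_nonneg _)
    _ = 4 * d * L ^ 2 / c₀ := by
        rw [div_pow, div_mul_div_comm, div_eq_div_iff (by positivity) (by positivity)]
        ring
end

section
/- (Descent inequality for projected gradient with inexact gradients.) Let \(J : \mathbb{R}^d \to \mathbb{R}\) be differentiable with L-Lipschitz gradient and \(\|\nabla J\| \le L\) on \(\Theta\), let \(\Theta\) be nonempty closed convex, \(\theta_k \in \Theta\), \(\alpha_k > 0\), \(g_k \in \mathbb{R}^d\) an arbitrary gradient estimate, and set \(\theta_{k+1} = \Pi_\Theta(\theta_k + \alpha_k g_k)\). Then \(J(\theta_k) - J(\theta_{k+1}) \le L\alpha_k \|\nabla J(\theta_k) - g_k\| - \alpha_k \|\mathcal{P}_\Theta(\theta_k, \nabla J(\theta_k), \alpha_k)\|^2 + \frac{L \alpha_k^2}{2}\|g_k\|^2\). -/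
/-!
Write `θ⁺ = θ + α 𝒫(g)` with `𝒫(f) = α⁻¹ (Π(θ + α f) - θ)`. The descent lemma gives
`J θ - J θ⁺ ≤ -α ⟪∇J θ, 𝒫(g)⟫ + L α² ‖𝒫(g)‖² / 2`. The variational inequality of `Π` makes
`𝒫` satisfy `‖𝒫(f)‖² ≤ ⟪f, 𝒫(f)⟫` (so `‖𝒫(g)‖ ≤ ‖g‖`) and makes `Π`, hence `𝒫`, nonexpansive.
Splitting `⟪∇J θ, 𝒫(g)⟫ = ⟪∇J θ, 𝒫(∇J θ)⟫ + ⟪∇J θ, 𝒫(g) - 𝒫(∇J θ)⟫` and using `‖∇J θ‖ ≤ L`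
bounds the inner product below by `‖𝒫(∇J θ)‖² - L ‖∇J θ - g‖`.
-/

open scoped InnerProductSpace

section Descent

variable {E : Type*} [NormedAddCommGroup E] [InnerProductSpace ℝ E] [CompleteSpace E]

theorem hasDerivAt_comp_add_smul {J : E → ℝ} (hJ : Differentiable ℝ J) (x v : E) (t : ℝ) :
    HasDerivAt (fun s : ℝ => J (x + s • v)) ⟪gradient J (x + t • v), v⟫_ℝ t := by
  have hline : HasDerivAt (fun s : ℝ => x + s • v) v t := by
    simpa using ((hasDerivAt_id t).smul_const v).const_add x
  simpa [Function.comp_def] using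
    (hJ (x + t • v)).hasGradientAt.hasFDerivAt.comp_hasDerivAt t hline

theorem sub_le_neg_inner_gradient_add_of_lipschitz {J : E → ℝ} (hJ : Differentiable ℝ J)
    {L : ℝ} (hlip : ∀ x y, ‖gradient J x - gradient J y‖ ≤ L * ‖x - y‖) (x y : E) :
    J x - J y ≤ -⟪gradient J x, y - x⟫_ℝ + L / 2 * ‖y - x‖ ^ 2 := by
  set v := y - x with hv
  -- `ψ` is nondecreasing on `[0, ∞)`, and `ψ 0 ≤ ψ 1` is the claim.
  set ψ : ℝ → ℝ := fun t => J (x + t • v) - t * ⟪gradient J x, v⟫_ℝ + L / 2 * t ^ 2 * ‖v‖ ^ 2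
  have hψ : ∀ t, HasDerivAt ψ
      (⟪gradient J (x + t • v), v⟫_ℝ - ⟪gradient J x, v⟫_ℝ + L * t * ‖v‖ ^ 2) t := by
    intro t
    have hquad := ((hasDerivAt_pow 2 t).const_mul (L / 2)).mul_const (‖v‖ ^ 2)
    refine (((hasDerivAt_comp_add_smul hJ x v t).sub
      (hasDerivAt_mul_const ⟪gradient J x, v⟫_ℝ)).add hquad).congr_deriv ?_
    push_cast
    ring
  have hψ'_nonneg : ∀ t ∈ interior (Set.Ici (0 : ℝ)),
      0 ≤ ⟪gradient J (x + t • v), v⟫_ℝ - ⟪gradient J x, v⟫_ℝ + L * t * ‖v‖ ^ 2 := by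
    intro t ht
    rw [interior_Ici, Set.mem_Ioi] at ht
    have hstep : ‖gradient J (x + t • v) - gradient J x‖ ≤ L * (t * ‖v‖) := by
      simpa [norm_smul, abs_of_pos ht] using hlip (x + t • v) x
    have hcs := abs_real_inner_le_norm (gradient J (x + t • v) - gradient J x) v
    rw [inner_sub_left] at hcs
    nlinarith [abs_le.mp hcs, norm_nonneg v]
  have hmono : MonotoneOn ψ (Set.Ici 0) :=
    monotoneOn_of_hasDerivWithinAt_nonneg (convex_Ici 0)
      (fun t _ => (hψ t).continuousAt.continuousWithinAt)
      (fun t _ => (hψ t).hasDerivWithinAt) hψ'_nonneg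
  have h01 := hmono Set.self_mem_Ici (Set.mem_Ici.mpr zero_le_one) zero_le_one
  simp only [ψ, hv, zero_smul, add_zero, one_smul, add_sub_cancel] at h01
  linarith

end Descent

section Projection

variable {E : Type*} [NormedAddCommGroup E] [InnerProductSpace ℝ E] {Θ : Set E} {Proj : E → E}

theorem norm_le_of_norm_sq_le_inner {u w : E} (h : ‖u‖ ^ 2 ≤ ⟪w, u⟫_ℝ) : ‖u‖ ≤ ‖w‖ := by
  nlinarith [real_inner_le_norm w u, norm_nonneg u, norm_nonneg w]

theorem norm_sub_sq_le_inner_of_variational_ineq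
    (hmem : ∀ x, Proj x ∈ Θ) (hchar : ∀ x, ∀ y ∈ Θ, ⟪x - Proj x, y - Proj x⟫_ℝ ≤ 0) (a b : E) :
    ‖Proj a - Proj b‖ ^ 2 ≤ ⟪a - b, Proj a - Proj b⟫_ℝ := by
  have ha := hchar a (Proj b) (hmem b)
  have hb := hchar b (Proj a) (hmem a)
  have hsum : ⟪a - b, Proj a - Proj b⟫_ℝ - ‖Proj a - Proj b‖ ^ 2 =
      -⟪a - Proj a, Proj b - Proj a⟫_ℝ - ⟪b - Proj b, Proj a - Proj b⟫_ℝ := by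
    rw [← real_inner_self_eq_norm_sq]
    simp only [inner_sub_left, inner_sub_right]
    linarith [real_inner_comm (Proj a) (Proj b)]
  linarith

theorem norm_sub_le_of_variational_ineq
    (hmem : ∀ x, Proj x ∈ Θ) (hchar : ∀ x, ∀ y ∈ Θ, ⟪x - Proj x, y - Proj x⟫_ℝ ≤ 0) (a b : E) :
    ‖Proj a - Proj b‖ ≤ ‖a - b‖ :=
  norm_le_of_norm_sq_le_inner (norm_sub_sq_le_inner_of_variational_ineq hmem hchar a b)

noncomputable def projGradMap (Proj : E → E) (θ f : E) (α : ℝ) : E := α⁻¹ • (Proj (θ + α • f) - θ)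

theorem add_smul_projGradMap (Proj : E → E) (θ f : E) {α : ℝ} (hα : α ≠ 0) :
    θ + α • projGradMap Proj θ f α = Proj (θ + α • f) := by
  rw [projGradMap, smul_smul, mul_inv_cancel₀ hα, one_smul, add_sub_cancel]

theorem norm_projGradMap_sq_le_inner
    (hchar : ∀ x, ∀ y ∈ Θ, ⟪x - Proj x, y - Proj x⟫_ℝ ≤ 0) {θ : E} (hθ : θ ∈ Θ)
    {α : ℝ} (hα : 0 < α) (f : E) :
    ‖projGradMap Proj θ f α‖ ^ 2 ≤ ⟪f, projGradMap Proj θ f α⟫_ℝ := by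
  have h := hchar (θ + α • f) θ hθ
  rw [← add_smul_projGradMap Proj θ f hα.ne', add_sub_add_left_eq_sub, sub_add_cancel_left,
    ← smul_sub, inner_neg_right, real_inner_smul_left, real_inner_smul_right,
    inner_sub_left, real_inner_self_eq_norm_sq] at h
  nlinarith [mul_pos hα hα]

theorem norm_projGradMap_le
    (hchar : ∀ x, ∀ y ∈ Θ, ⟪x - Proj x, y - Proj x⟫_ℝ ≤ 0) {θ : E} (hθ : θ ∈ Θ)
    {α : ℝ} (hα : 0 < α) (f : E) :
    ‖projGradMap Proj θ f α‖ ≤ ‖f‖ :=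
  norm_le_of_norm_sq_le_inner (norm_projGradMap_sq_le_inner hchar hθ hα f)

theorem norm_projGradMap_sub_le
    (hmem : ∀ x, Proj x ∈ Θ) (hchar : ∀ x, ∀ y ∈ Θ, ⟪x - Proj x, y - Proj x⟫_ℝ ≤ 0)
    (θ : E) {α : ℝ} (hα : 0 < α) (f g : E) :
    ‖projGradMap Proj θ f α - projGradMap Proj θ g α‖ ≤ ‖f - g‖ := by
  have h := norm_sub_le_of_variational_ineq hmem hchar (θ + α • f) (θ + α • g)
  rw [add_sub_add_left_eq_sub, ← smul_sub, norm_smul, Real.norm_of_nonneg hα.le] at h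
  rw [projGradMap, projGradMap, ← smul_sub, sub_sub_sub_cancel_right, norm_smul,
    Real.norm_of_nonneg (inv_nonneg.mpr hα.le), inv_mul_le_iff₀ hα]
  exact h

theorem norm_projGradMap_sq_sub_le_inner
    (hmem : ∀ x, Proj x ∈ Θ) (hchar : ∀ x, ∀ y ∈ Θ, ⟪x - Proj x, y - Proj x⟫_ℝ ≤ 0)
    {θ : E} (hθ : θ ∈ Θ) {α : ℝ} (hα : 0 < α) (f g : E) :
    ‖projGradMap Proj θ f α‖ ^ 2 - ‖f‖ * ‖f - g‖ ≤ ⟪f, projGradMap Proj θ g α⟫_ℝ := by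
  have hf := norm_projGradMap_sq_le_inner hchar hθ hα f
  have hcs := real_inner_le_norm f (projGradMap Proj θ f α - projGradMap Proj θ g α)
  have hdiff := mul_le_mul_of_nonneg_left
    (norm_projGradMap_sub_le hmem hchar θ hα f g) (norm_nonneg f)
  rw [inner_sub_right] at hcs
  linarith

end Projection

theorem projected_ascent_descent_ineq_general {d : ℕ}
    (Θ : Set (EuclideanSpace ℝ (Fin d)))
    (Proj : EuclideanSpace ℝ (Fin d) → EuclideanSpace ℝ (Fin d))
    (hProj_mem : ∀ x, Proj x ∈ Θ)
    (hProj_char : ∀ x, ∀ y ∈ Θ, inner ℝ (x - Proj x) (y - Proj x) ≤ (0 : ℝ))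
    (J : EuclideanSpace ℝ (Fin d) → ℝ) (hJ : Differentiable ℝ J)
    (L : ℝ)
    (hgrad_lip : ∀ x y, ‖gradient J x - gradient J y‖ ≤ L * ‖x - y‖)
    (hgrad_bdd : ∀ x ∈ Θ, ‖gradient J x‖ ≤ L)
    (θk : EuclideanSpace ℝ (Fin d)) (hθk : θk ∈ Θ)
    (αk : ℝ) (hαk : 0 < αk) (gk : EuclideanSpace ℝ (Fin d)) :
    J θk - J (Proj (θk + αk • gk)) ≤
      L * αk * ‖gradient J θk - gk‖ -
        αk * ‖(αk⁻¹ : ℝ) • (Proj (θk + αk • gradient J θk) - θk)‖ ^ 2 +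
          L * αk ^ 2 / 2 * ‖gk‖ ^ 2 := by
  set G := gradient J θk
  set Pg := projGradMap Proj θk gk αk
  change _ ≤ L * αk * ‖G - gk‖ - αk * ‖projGradMap Proj θk G αk‖ ^ 2 + _
  have hdesc := sub_le_neg_inner_gradient_add_of_lipschitz hJ hgrad_lip θk (θk + αk • Pg)
  rw [add_sub_cancel_left, real_inner_smul_right, norm_smul, Real.norm_of_nonneg hαk.le,
    add_smul_projGradMap Proj θk gk hαk.ne'] at hdesc
  have hinner := norm_projGradMap_sq_sub_le_inner hProj_mem hProj_char hθk hαk G gk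
  have hPg : ‖Pg‖ ≤ ‖gk‖ := norm_projGradMap_le hProj_char hθk hαk gk
  have hG : ‖G‖ ≤ L := hgrad_bdd θk hθk
  have hL : 0 ≤ L := (norm_nonneg G).trans hG
  calc J θk - J (Proj (θk + αk • gk))
      ≤ -(αk * ⟪G, Pg⟫_ℝ) + L / 2 * (αk * ‖Pg‖) ^ 2 := hdesc
    _ ≤ -(αk * (‖projGradMap Proj θk G αk‖ ^ 2 - ‖G‖ * ‖G - gk‖)) + L / 2 * (αk * ‖gk‖) ^ 2 := by
      gcongr
    _ ≤ _ := by
      have := mul_le_mul_of_nonneg_right hG (mul_nonneg hαk.le (norm_nonneg (G - gk)))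
      linarith

/-- Descent inequality for one step of projected gradient ascent with an inexact gradient:
with `θ_{k+1} = Proj_Θ(θ_k + α_k g_k)`,
`J(θ_k) - J(θ_{k+1}) ≤ L α_k ‖∇J(θ_k) - g_k‖ - α_k ‖P_Θ(θ_k, ∇J(θ_k), α_k)‖² + (L α_k²/2)‖g_k‖²`. -/
theorem projected_ascent_descent_ineq {d : ℕ}
    (Θ : Set (EuclideanSpace ℝ (Fin d)))
    (hne : Θ.Nonempty) (hcl : IsClosed Θ) (hconv : Convex ℝ Θ)
    (Proj : EuclideanSpace ℝ (Fin d) → EuclideanSpace ℝ (Fin d))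
    (hProj_mem : ∀ x, Proj x ∈ Θ)
    (hProj_char : ∀ x, ∀ y ∈ Θ, inner ℝ (x - Proj x) (y - Proj x) ≤ (0 : ℝ))
    (J : EuclideanSpace ℝ (Fin d) → ℝ) (hJ : Differentiable ℝ J)
    (L : ℝ) (hL : 0 < L)
    (hgrad_lip : ∀ x y, ‖gradient J x - gradient J y‖ ≤ L * ‖x - y‖)
    (hgrad_bdd : ∀ x ∈ Θ, ‖gradient J x‖ ≤ L)
    (θk : EuclideanSpace ℝ (Fin d)) (hθk : θk ∈ Θ)
    (αk : ℝ) (hαk : 0 < αk) (gk : EuclideanSpace ℝ (Fin d)) :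
    J θk - J (Proj (θk + αk • gk)) ≤
      L * αk * ‖gradient J θk - gk‖ -
        αk * ‖(αk⁻¹ : ℝ) • (Proj (θk + αk • gradient J θk) - θk)‖ ^ 2 +
          L * αk ^ 2 / 2 * ‖gk‖ ^ 2 :=
  projected_ascent_descent_ineq_general Θ Proj hProj_mem hProj_char J hJ L hgrad_lip hgrad_bdd θk
    hθk αk hαk gk
end
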